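/- Let G be a finite connected graph and W a parallel double trace of G such that the vertex figure of some vertex with respect to W is disconnected. Then there exists a parallel double trace W' of G such that the total number of connected components of the vertex figures of all vertices with respect to W' is strictly smaller than the corresponding total for W. -/

import Mathlib

/-!
Let `v` be a vertex with disconnected vertex figure. Among the visits of `W` to `v`, taken in
their order along the walk, two consecutive ones have transitions in different components;
rotate `W` so that they sit at positions `0` and `J`. As `W` is parallel, its step from
position `0` to position `1` is made a second time, at a position `Q ≥ J`. Exchanging the
segments `1, …, J - 1` and `Q + 1, …, n - 1` gives a closed walk with the same directed steps,
hence a parallel double trace. Its transitions are those of `W`, except that the visits at `0`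
and `J` exchange their incoming edges. Every edge at `v` occurs exactly twice among the
transitions at `v`, so the vertex figure has no bridge; hence the exchange merges the two
components and leaves the other vertex figures unchanged.
-/

namespace StrongTraces

open SimpleGraph Finset

/-- Cyclic successor on `Fin n`. -/
def csucc {n : ℕ} (i : Fin n) : Fin n :=
  ⟨(i.val + 1) % n, Nat.mod_lt _ (by have := i.isLt; omega)⟩

/-- Cyclic predecessor on `Fin n`. -/
def cpred {n : ℕ} (i : Fin n) : Fin n :=
  ⟨(i.val + n - 1) % n, Nat.mod_lt _ (by have := i.isLt; omega)⟩

variable {V : Type*} [Fintype V] [DecidableEq V]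

/-- A double trace of `G`: a closed walk, encoded as a cyclic sequence of `n` vertices
(read cyclically, so step `i` goes from `f i` to `f (csucc i)`), that traverses every
edge of `G` exactly twice.  (`n = 0` encodes the trivial closed walk.) -/
structure DoubleTrace (G : SimpleGraph V) where
  n : ℕ
  f : Fin n → V
  adj : ∀ i : Fin n, G.Adj (f i) (f (csucc i))
  twice : ∀ e ∈ G.edgeSet,
    (Finset.univ.filter fun i : Fin n => s(f i, f (csucc i)) = e).card = 2

variable {G : SimpleGraph V}

/-- `W` has an `N`-repetition at `v`: at every visit of `W` to `v`, the predecessor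
lies in `N` if and only if the successor lies in `N`. -/
def DoubleTrace.HasRepetition (W : DoubleTrace G) (v : V) (N : Set V) : Prop :=
  ∀ i : Fin W.n, W.f i = v → (W.f (cpred i) ∈ N ↔ W.f (csucc i) ∈ N)

/-- A strong trace: a double trace all of whose repetitions are trivial
(`N = ∅` or `N = N(v)`). -/
def DoubleTrace.IsStrong (W : DoubleTrace G) : Prop :=
  ∀ (v : V) (N : Set V), N ⊆ G.neighborSet v → W.HasRepetition v N →
    N = ∅ ∨ N = G.neighborSet v

/-- A `d`-stable trace: a double trace with no `N`-repetition with `1 ≤ |N| ≤ d`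
at any vertex. -/
def DoubleTrace.IsStable (W : DoubleTrace G) (d : ℕ) : Prop :=
  ∀ (v : V) (N : Set V), N ⊆ G.neighborSet v → 1 ≤ N.ncard → N.ncard ≤ d →
    ¬ W.HasRepetition v N

/-- The number of times `W` makes the directed step from `u` to `v`. -/
def DoubleTrace.traversalCount (W : DoubleTrace G) (u v : V) : ℕ :=
  (Finset.univ.filter fun i : Fin W.n => W.f i = u ∧ W.f (csucc i) = v).card

/-- `W` traverses every edge once in each direction. -/
def DoubleTrace.IsAntiparallel (W : DoubleTrace G) : Prop :=
  ∀ u v : V, G.Adj u v → W.traversalCount u v = 1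

/-- `W` traverses every edge twice in the same direction. -/
def DoubleTrace.IsParallel (W : DoubleTrace G) : Prop :=
  ∀ u v : V, G.Adj u v → W.traversalCount u v = 0 ∨ W.traversalCount u v = 2

/-- The adjacency relation of the vertex figure of `v` with respect to `W`:
two edges incident with `v` are related if they occur consecutively at some visit
of `W` to `v`. -/
def DoubleTrace.VertexFigureRel (W : DoubleTrace G) (v : V) :
    G.incidenceSet v → G.incidenceSet v → Prop :=
  fun e e' => ∃ i : Fin W.n, W.f i = v ∧
    ((e.1 = s(W.f (cpred i), v) ∧ e'.1 = s(v, W.f (csucc i))) ∨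
     (e'.1 = s(W.f (cpred i), v) ∧ e.1 = s(v, W.f (csucc i))))

/-- The vertex figure of `v` with respect to `W` is connected: the equivalence
relation generated by consecutiveness at visits to `v` relates any two edges
incident with `v`. -/
def DoubleTrace.VertexFigureConnected (W : DoubleTrace G) (v : V) : Prop :=
  ∀ e e' : G.incidenceSet v, Relation.EqvGen (W.VertexFigureRel v) e e'

/-- The number of connected components of the vertex figure of `v` with respect to
`W`, i.e. the number of equivalence classes of the equivalence relation generated by
consecutiveness at visits to `v`. -/
noncomputable def DoubleTrace.vertexFigureComponents (W : DoubleTrace G) (v : V) : ℕ :=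
  Nat.card (Quot (W.VertexFigureRel v))

/-- The number of edges of `H` lying in the connected component `c` of `H`. -/
noncomputable def componentEdgeCount (H : SimpleGraph V) (c : H.ConnectedComponent) : ℕ :=
  Nat.card {e : Sym2 V | e ∈ H.edgeSet ∧ ∀ x ∈ e, H.connectedComponentMk x = c}

end StrongTraces

namespace StrongTraces

open SimpleGraph Finset Relation

variable {V : Type*} [DecidableEq V] {G : SimpleGraph V}

section Cyclic

variable {n : ℕ}

theorem csucc_cpred (k : Fin n) : csucc (cpred k) = k := by
  apply Fin.ext
  have := k.isLt
  simp only [csucc, cpred, Nat.mod_add_mod]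
  rw [show k.val + n - 1 + 1 = k.val + n by omega, Nat.add_mod_right, Nat.mod_eq_of_lt k.isLt]

theorem cpred_csucc (k : Fin n) : cpred (csucc k) = k := by
  apply Fin.ext
  have := k.isLt
  simp only [csucc, cpred]
  rw [show (k.val + 1) % n + n - 1 = (k.val + 1) % n + (n - 1) by omega, Nat.mod_add_mod,
    show k.val + 1 + (n - 1) = k.val + n by omega, Nat.add_mod_right, Nat.mod_eq_of_lt k.isLt]

theorem csucc_bijective : Function.Bijective (csucc : Fin n → Fin n) :=
  Function.bijective_iff_has_inverse.mpr ⟨cpred, cpred_csucc, csucc_cpred⟩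

theorem val_csucc (k : Fin n) : (csucc k).val = if k.val + 1 = n then 0 else k.val + 1 := by
  have := k.isLt
  split_ifs with h
  · simp [csucc, h]
  · exact Nat.mod_eq_of_lt (by omega)

theorem val_cpred (k : Fin n) : (cpred k).val = if k.val = 0 then n - 1 else k.val - 1 := by
  have h := congrArg Fin.val (csucc_cpred k)
  have := (cpred k).isLt
  rw [val_csucc] at h
  split_ifs at h ⊢ <;> omega

theorem cpred_eq_of_csucc_eq {ord σ : Fin n → Fin n} (hσ : Function.Involutive σ)
    (h : ∀ t, ord (csucc t) = csucc (σ (ord t))) (t : Fin n) :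
    ord (cpred t) = σ (cpred (ord t)) := by
  have := congrArg cpred (h (cpred t))
  rw [csucc_cpred, cpred_csucc] at this
  rw [this, hσ]

theorem csucc_add (t c : Fin n) : csucc t + c = csucc (t + c) := by
  apply Fin.ext
  simp only [csucc, Fin.val_add, Nat.mod_add_mod, add_right_comm]

theorem cpred_add (t c : Fin n) : cpred t + c = cpred (t + c) :=
  cpred_eq_of_csucc_eq (ord := (· + c)) (σ := id) (fun _ => rfl) (fun t => csucc_add t c) t

end Cyclic

theorem card_filter_comp_of_bijective {α : Type*} [Fintype α] {e : α → α}
    (he : Function.Bijective e) (p : α → Prop) [DecidablePred p] :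
    #{x | p (e x)} = #{x | p x} :=
  Finset.card_bijective e he (by simp)

theorem card_filter_subtype {α : Type*} [Fintype α] (p q : α → Prop) [DecidablePred p]
    [DecidablePred q] : #{k : {x // p x} | q k} = #{x | p x ∧ q x} := by
  rw [← Fintype.card_subtype, ← Fintype.card_subtype]
  exact Fintype.card_congr (Equiv.subtypeSubtypeEquivSubtypeInter _ _)

theorem exists_covBy_ne_of_ne {α β : Type*} [LinearOrder α] [Finite α] (c : α → β) {x y : α}
    (hxy : c x ≠ c y) : ∃ i j, i ⋖ j ∧ c i ≠ c j := by
  wlog hle : x ≤ y generalizing x y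
  · exact this hxy.symm (le_of_not_ge hle)
  obtain ⟨a, rfl, m, rfl, hcov⟩ := exists_covBy_seq_of_wellFoundedLT_wellFoundedGT_of_le hle
  by_contra! hall
  have : ∀ k ≤ m, c (a k) = c (a 0) := by
    intro k hk
    induction k with
    | zero => rfl
    | succ k ih => rw [← hall _ _ (hcov k (by omega)), ih (by omega)]
  exact hxy (this m le_rfl).symm

section PairRel

variable {T E : Type*}

/-- A figure is given by slots `t`, each joining `a t` to `b t`; a vertex figure has the visits
as slots, each joining the incoming to the outgoing edge. -/
def pairRel (a b : T → E) (x y : E) : Prop :=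
  ∃ t, (a t = x ∧ b t = y) ∨ (a t = y ∧ b t = x)

theorem pairRel_apply (a b : T → E) (t : T) : pairRel a b (a t) (b t) :=
  ⟨t, Or.inl ⟨rfl, rfl⟩⟩

theorem pairRel_comp_of_surjective {T' : Type*} (a b : T → E) {φ : T' → T}
    (hφ : Function.Surjective φ) : pairRel (a ∘ φ) (b ∘ φ) = pairRel a b := by
  ext x y
  constructor
  · rintro ⟨t, ht⟩
    exact ⟨φ t, ht⟩
  · rintro ⟨t, ht⟩
    obtain ⟨s, rfl⟩ := hφ t
    exact ⟨s, ht⟩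

variable [Fintype T] [DecidableEq E] {a b : T → E}

theorem exists_eqvGen_pairRel_apply
    (hdeg : ∀ e, #{t | a t = e} + #{t | b t = e} = 2) (e : E) :
    ∃ t, EqvGen (pairRel a b) (a t) e := by
  by_cases ha : #{t | a t = e} = 0
  · obtain ⟨t, ht⟩ := Finset.card_pos.mp (show 0 < #{t | b t = e} by have := hdeg e; omega)
    rw [(Finset.mem_filter.mp ht).2.symm]
    exact ⟨t, EqvGen.rel _ _ (pairRel_apply a b t)⟩
  · obtain ⟨t, ht⟩ := Finset.card_pos.mp (Nat.pos_of_ne_zero ha)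
    rw [(Finset.mem_filter.mp ht).2.symm]
    exact ⟨t, EqvGen.refl _⟩

/-- Parity: every element lies on exactly two slot ends, so no slot is a bridge. -/
theorem mem_iff_mem_of_forall_ne (hdeg : ∀ e, #{t | a t = e} + #{t | b t = e} = 2)
    (Z : Finset E) (t₀ : T) (hZ : ∀ t ≠ t₀, (a t ∈ Z ↔ b t ∈ Z)) : a t₀ ∈ Z ↔ b t₀ ∈ Z := by
  classical
  have htotal : #{t | a t ∈ Z} + #{t | b t ∈ Z} = 2 * #Z := by
    rw [← sum_card_fiberwise_eq_card_filter, ← sum_card_fiberwise_eq_card_filter,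
      ← sum_add_distrib, sum_congr rfl (fun e _ => hdeg e), sum_const, smul_eq_mul, mul_comm]
  have herase : ({t | a t ∈ Z} : Finset T).erase t₀ = ({t | b t ∈ Z} : Finset T).erase t₀ := by
    ext t
    simp only [mem_erase, mem_filter, mem_univ, true_and]
    exact and_congr_right (hZ t)
  have hcard := congrArg Finset.card herase
  have hpos : ∀ p : T → Prop, [DecidablePred p] → p t₀ → 0 < #{t | p t} :=
    fun p _ h => card_pos.mpr ⟨t₀, by simpa using h⟩
  by_cases ha : a t₀ ∈ Z <;> by_cases hb : b t₀ ∈ Z <;> simp only [ha, hb]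
  · rw [card_erase_of_mem (by simpa using ha), erase_eq_of_notMem (by simpa using hb)] at hcard
    have := hpos (a · ∈ Z) ha
    omega
  · rw [erase_eq_of_notMem (by simpa using ha), card_erase_of_mem (by simpa using hb)] at hcard
    have := hpos (b · ∈ Z) hb
    omega

theorem eqvGen_pairRel_swap [Finite E] [DecidableEq T]
    (hdeg : ∀ e, #{t | a t = e} + #{t | b t = e} = 2)
    {i j : T} (hij : ¬ EqvGen (pairRel a b) (a i) (a j)) :
    EqvGen (pairRel (a ∘ Equiv.swap i j) b) (a i) (b i) := by
  classical
  have := Fintype.ofFinite E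
  let Rm := pairRel (fun t : {t // t ≠ i ∧ t ≠ j} => a t) (fun t => b t)
  have hRm : Rm ≤ pairRel a b := fun _ _ ⟨t, ht⟩ => ⟨t.1, ht⟩
  have hRm' : Rm ≤ pairRel (a ∘ Equiv.swap i j) b := fun _ _ ⟨t, ht⟩ =>
    ⟨t.1, by rwa [Function.comp_apply, Equiv.swap_apply_of_ne_of_ne t.2.1 t.2.2]⟩
  -- slot `j` lies in another component, so parity applies to the slots other than `i` and `j`
  have hZ := mem_iff_mem_of_forall_ne hdeg {e | EqvGen Rm (a i) e} i fun t hti => by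
    simp only [mem_filter, mem_univ, true_and]
    by_cases htj : t = j
    · subst htj
      have hR : EqvGen (pairRel a b) (a t) (b t) := EqvGen.rel _ _ (pairRel_apply a b t)
      exact iff_of_false (fun h => hij (EqvGen.mono hRm _ _ h))
        (fun h => hij ((EqvGen.mono hRm _ _ h).trans _ _ _ hR.symm))
    · have hslot : Rm (a t) (b t) := pairRel_apply _ _ (⟨t, hti, htj⟩ : {t // t ≠ i ∧ t ≠ j})
      exact ⟨fun h => h.trans _ _ _ (EqvGen.rel _ _ hslot),
        fun h => h.trans _ _ _ (EqvGen.rel _ _ hslot).symm⟩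
  simp only [mem_filter, mem_univ, true_and] at hZ
  exact EqvGen.mono hRm' _ _ (hZ.mp (EqvGen.refl _))

/-- The exchange merges the two components and keeps all others. -/
theorem card_quot_pairRel_swap_lt [Finite E] [DecidableEq T]
    (hdeg : ∀ e, #{t | a t = e} + #{t | b t = e} = 2)
    {i j : T} (hij : ¬ EqvGen (pairRel a b) (a i) (a j)) :
    Nat.card (Quot (pairRel (a ∘ Equiv.swap i j) b)) < Nat.card (Quot (pairRel a b)) := by
  have hle : ∀ x y, pairRel a b x y → EqvGen (pairRel (a ∘ Equiv.swap i j) b) x y := by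
    rintro x y ⟨t, ht⟩
    have hslot : EqvGen (pairRel (a ∘ Equiv.swap i j) b) (a t) (b t) := by
      by_cases hti : t = i
      · subst hti
        exact eqvGen_pairRel_swap hdeg hij
      by_cases htj : t = j
      · subst htj
        rw [Equiv.swap_comm]
        exact eqvGen_pairRel_swap hdeg fun h => hij h.symm
      exact EqvGen.rel _ _ ⟨t, Or.inl ⟨by simp [Equiv.swap_apply_of_ne_of_ne hti htj], rfl⟩⟩
    rcases ht with ⟨rfl, rfl⟩ | ⟨rfl, rfl⟩
    exacts [hslot, hslot.symm]
  let φ : Quot (pairRel a b) → Quot (pairRel (a ∘ Equiv.swap i j) b) :=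
    Quot.lift (Quot.mk _) fun x y h => Quot.eqvGen_sound (hle x y h)
  have hsurj : Function.Surjective φ := Quot.ind fun x => ⟨Quot.mk _ x, rfl⟩
  have hmerge : φ (Quot.mk _ (b i)) = φ (Quot.mk _ (a j)) :=
    Quot.sound ⟨i, Or.inr ⟨by simp, rfl⟩⟩
  have hninj : ¬ Function.Injective φ := fun hinj =>
    hij ((EqvGen.rel _ _ (pairRel_apply a b i)).trans _ _ _ (Quot.eqvGen_exact (hinj hmerge)))
  have := Fintype.ofFinite (Quot (pairRel a b))
  have := Fintype.ofFinite (Quot (pairRel (a ∘ Equiv.swap i j) b))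
  simpa only [Nat.card_eq_fintype_card] using
    Fintype.card_lt_of_surjective_not_injective φ hsurj hninj

end PairRel

namespace DoubleTrace

variable (W : DoubleTrace G)

theorem adj_cpred (k : Fin W.n) : G.Adj (W.f (cpred k)) (W.f k) := by
  simpa only [csucc_cpred] using W.adj (cpred k)

def inEdge (v : V) (k : {k : Fin W.n // W.f k = v}) : G.incidenceSet v :=
  ⟨s(W.f (cpred k), v), (G.mk'_mem_incidenceSet_iff).mpr
    ⟨by obtain ⟨k, rfl⟩ := k; exact W.adj_cpred k, Or.inr rfl⟩⟩

def outEdge (v : V) (k : {k : Fin W.n // W.f k = v}) : G.incidenceSet v :=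
  ⟨s(v, W.f (csucc k)), (G.mk'_mem_incidenceSet_left_iff).mpr
    (by obtain ⟨k, rfl⟩ := k; exact W.adj k)⟩

theorem vertexFigureRel_eq_pairRel (v : V) :
    W.VertexFigureRel v = pairRel (W.inEdge v) (W.outEdge v) := by
  ext e e'
  simp only [VertexFigureRel, pairRel, inEdge, outEdge, Subtype.ext_iff, Subtype.exists]
  exact exists_congr fun k => by simp only [exists_prop, eq_comm]

theorem traversalCount_add_traversalCount {u w : V} (h : G.Adj u w) :
    W.traversalCount u w + W.traversalCount w u = 2 := by
  rw [traversalCount, traversalCount, ← card_union_of_disjoint, ← filter_or,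
    ← W.twice _ ((G.mem_edgeSet).mpr h)]
  · simp only [Sym2.eq_iff]
  · exact disjoint_filter.mpr fun k _ h₁ h₂ => h.ne (h₁.1.symm.trans h₂.1)

theorem card_inEdge_add_card_outEdge (v : V) (e : G.incidenceSet v) :
    #{k | W.inEdge v k = e} + #{k | W.outEdge v k = e} = 2 := by
  obtain ⟨w, hw⟩ := Sym2.mem_iff_exists.mp e.2.2
  have hvw : G.Adj v w := (G.mem_edgeSet).mp (hw ▸ e.2.1)
  have hin : ∀ x, s(x, v) = s(v, w) ↔ x = w := fun x => by simp [hvw.ne, eq_comm]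
  have hout : ∀ x, s(v, x) = s(v, w) ↔ x = w := fun x => by simp [hvw.ne]
  simp only [inEdge, outEdge, Subtype.ext_iff, hw, hin, hout]
  rw [card_filter_subtype (W.f · = v) (fun k => W.f (cpred k) = w),
    card_filter_subtype (W.f · = v) (fun k => W.f (csucc k) = w),
    ← card_filter_comp_of_bijective csucc_bijective]
  simp only [cpred_csucc, and_comm (a := W.f (csucc _) = v)]
  exact W.traversalCount_add_traversalCount hvw.symm

def reindex (ord : Fin W.n → Fin W.n) (hord : Function.Bijective ord)
    (hstep : ∀ t, W.f (ord (csucc t)) = W.f (csucc (ord t))) : DoubleTrace G where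
  n := W.n
  f := W.f ∘ ord
  adj t := by simpa only [Function.comp_apply, hstep] using W.adj (ord t)
  twice e he := by
    simp only [Function.comp_apply, hstep]
    exact (card_filter_comp_of_bijective hord (fun x => s(W.f x, W.f (csucc x)) = e)).trans
      (W.twice e he)

variable {W} {ord : Fin W.n → Fin W.n} {hord : Function.Bijective ord}
  {hstep : ∀ t, W.f (ord (csucc t)) = W.f (csucc (ord t))}

theorem traversalCount_reindex (u w : V) :
    (W.reindex ord hord hstep).traversalCount u w = W.traversalCount u w := by
  simp only [traversalCount, reindex, Function.comp_apply, hstep]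
  exact card_filter_comp_of_bijective hord (fun x => W.f x = u ∧ W.f (csucc x) = w)

theorem IsParallel.reindex (hW : W.IsParallel) : (W.reindex ord hord hstep).IsParallel :=
  fun u w h => by simpa only [traversalCount_reindex] using hW u w h

theorem vertexFigureRel_reindex (w : V) (g : {x : Fin W.n // W.f x = w} → G.incidenceSet w)
    (hg : ∀ t (ht : W.f (ord t) = w), (g ⟨ord t, ht⟩ : Sym2 V) = s(W.f (ord (cpred t)), w)) :
    (W.reindex ord hord hstep).VertexFigureRel w = pairRel g (W.outEdge w) := by
  let W' := W.reindex ord hord hstep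
  let φ : {t : Fin W'.n // W'.f t = w} → {x : Fin W.n // W.f x = w} := fun t => ⟨ord t.1, t.2⟩
  have hφ : Function.Surjective φ := fun x => by
    obtain ⟨t, ht⟩ := hord.2 x
    exact ⟨⟨t, by simp [W', reindex, ht, x.2]⟩, Subtype.ext ht⟩
  rw [vertexFigureRel_eq_pairRel, ← pairRel_comp_of_surjective g (W.outEdge w) hφ]
  congr 1 <;> funext t <;> apply Subtype.ext
  · exact (hg t.1 t.2).symm
  · exact congrArg (s(w, ·)) (hstep t.1)

variable (W)

def rotate (c : Fin W.n) : DoubleTrace G :=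
  W.reindex (· + c)
    (by
      have := NeZero.of_pos c.pos
      exact (add_left_injective c).bijective_of_finite)
    (fun t => by rw [csucc_add])

theorem inEdge_rotate (c : Fin W.n) {w : V} (t : Fin W.n) (ht : W.f (t + c) = w) :
    (W.rotate c).inEdge w ⟨t, ht⟩ = W.inEdge w ⟨t + c, ht⟩ :=
  Subtype.ext (congrArg (s(W.f ·, w)) (cpred_add t c))

theorem vertexFigureRel_rotate (c : Fin W.n) (w : V) :
    (W.rotate c).VertexFigureRel w = W.VertexFigureRel w := by
  rw [rotate, vertexFigureRel_reindex w (W.inEdge w) fun t ht => by simp [inEdge, cpred_add],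
    vertexFigureRel_eq_pairRel]

theorem IsParallel.rotate {W : DoubleTrace G} (hW : W.IsParallel) (c : Fin W.n) :
    (W.rotate c).IsParallel :=
  hW.reindex

theorem vertexFigureComponents_rotate (c : Fin W.n) (w : V) :
    (W.rotate c).vertexFigureComponents w = W.vertexFigureComponents w := by
  rw [vertexFigureComponents, vertexFigureComponents, vertexFigureRel_rotate]

end DoubleTrace

section SplicePositions

variable {n J Q : ℕ}

/-- The spliced walk reads position `0`, then the block `Q + 1, …, n - 1`, then `J, …, Q`,
and finally `1, …, J - 1`. -/
def spliceOrderVal (n J Q t : ℕ) : ℕ :=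
  if t = 0 then 0 else if t ≤ n - 1 - Q then t + Q else if t ≤ n - J then t + J + Q - n
  else t + J - n

/-- After position `o` the spliced walk continues with position `spliceExitVal n J Q o + 1`:
the exits of `n - 1` and `J - 1` are exchanged, and so are those of `0` and `Q`. -/
def spliceExitVal (n J Q o : ℕ) : ℕ :=
  if o = n - 1 then J - 1 else if o = J - 1 then n - 1 else if o = 0 then Q else if o = Q then 0
  else o

variable (hJ : 2 ≤ J) (hJQ : J ≤ Q) (hQ : Q + 2 ≤ n)
include hJ hJQ hQ

def spliceOrder (t : Fin n) : Fin n :=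
  ⟨spliceOrderVal n J Q t, by unfold spliceOrderVal; split_ifs <;> omega⟩

def spliceExit (x : Fin n) : Fin n :=
  ⟨spliceExitVal n J Q x, by have := x.isLt; unfold spliceExitVal; split_ifs <;> omega⟩

theorem spliceExit_involutive : Function.Involutive (spliceExit hJ hJQ hQ) := fun x => by
  apply Fin.ext
  have := x.isLt
  simp only [spliceExit, spliceExitVal]
  split_ifs <;> omega

theorem spliceOrder_injective : Function.Injective (spliceOrder hJ hJQ hQ) := fun t t' h => by
  apply Fin.ext
  have := t.isLt
  have := t'.isLt
  simp only [spliceOrder, spliceOrderVal, Fin.mk.injEq] at h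
  split_ifs at h <;> omega

theorem spliceOrder_csucc (t : Fin n) :
    spliceOrder hJ hJQ hQ (csucc t) = csucc (spliceExit hJ hJQ hQ (spliceOrder hJ hJQ hQ t)) := by
  apply Fin.ext
  have := t.isLt
  simp only [spliceOrder, spliceExit, val_csucc, spliceOrderVal, spliceExitVal]
  rcases (by omega : t.val = 0 ∨ (0 < t.val ∧ t.val < n - 1 - Q) ∨ t.val = n - 1 - Q ∨
    (n - 1 - Q < t.val ∧ t.val < n - J) ∨ t.val = n - J ∨ (n - J < t.val ∧ t.val < n - 1) ∨
    t.val = n - 1) with h | h | h | h | h | h | h <;>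
  simp (disch := omega) only [if_pos, if_neg, if_true] <;> omega

end SplicePositions

namespace DoubleTrace

section Splice

variable (W : DoubleTrace G) {J Q : ℕ} (hJ : 2 ≤ J) (hJQ : J ≤ Q) (hQ : Q + 2 ≤ W.n)
include hJ hJQ hQ

theorem f_csucc_spliceExit (hfJ : W.f ⟨J, by omega⟩ = W.f ⟨0, by omega⟩)
    (hfQ : W.f ⟨Q + 1, by omega⟩ = W.f ⟨1, by omega⟩) (x : Fin W.n) :
    W.f (csucc (spliceExit hJ hJQ hQ x)) = W.f (csucc x) := by
  have key : csucc (spliceExit hJ hJQ hQ x) = csucc x ∨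
      (csucc (spliceExit hJ hJQ hQ x) = ⟨J, by omega⟩ ∧ csucc x = ⟨0, by omega⟩) ∨
      (csucc (spliceExit hJ hJQ hQ x) = ⟨0, by omega⟩ ∧ csucc x = ⟨J, by omega⟩) ∨
      (csucc (spliceExit hJ hJQ hQ x) = ⟨Q + 1, by omega⟩ ∧ csucc x = ⟨1, by omega⟩) ∨
      (csucc (spliceExit hJ hJQ hQ x) = ⟨1, by omega⟩ ∧ csucc x = ⟨Q + 1, by omega⟩) := by
    have := x.isLt
    simp only [Fin.ext_iff, val_csucc, spliceExit, spliceExitVal]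
    split_ifs <;> omega
  rcases key with h | ⟨h₁, h₂⟩ | ⟨h₁, h₂⟩ | ⟨h₁, h₂⟩ | ⟨h₁, h₂⟩
  · rw [h]
  all_goals rw [h₁, h₂]
  exacts [hfJ, hfJ.symm, hfQ, hfQ.symm]

theorem f_spliceExit_cpred (hfQ₀ : W.f ⟨Q, by omega⟩ = W.f ⟨0, by omega⟩) (x : Fin W.n) :
    W.f (spliceExit hJ hJQ hQ (cpred x)) =
      W.f (cpred (Equiv.swap ⟨0, by omega⟩ ⟨J, by omega⟩ x)) := by
  have key : spliceExit hJ hJQ hQ (cpred x) = cpred (Equiv.swap ⟨0, by omega⟩ ⟨J, by omega⟩ x) ∨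
      (spliceExit hJ hJQ hQ (cpred x) = ⟨Q, by omega⟩ ∧
        cpred (Equiv.swap ⟨0, by omega⟩ ⟨J, by omega⟩ x) = ⟨0, by omega⟩) ∨
      (spliceExit hJ hJQ hQ (cpred x) = ⟨0, by omega⟩ ∧
        cpred (Equiv.swap ⟨0, by omega⟩ ⟨J, by omega⟩ x) = ⟨Q, by omega⟩) := by
    have := x.isLt
    rw [Equiv.swap_apply_def]
    split_ifs <;> simp only [Fin.ext_iff, val_cpred, spliceExit, spliceExitVal] at * <;>
      split_ifs <;> omega
  rcases key with h | ⟨h₁, h₂⟩ | ⟨h₁, h₂⟩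
  · rw [h]
  all_goals rw [h₁, h₂]
  exacts [hfQ₀, hfQ₀.symm]

def splice (hfJ : W.f ⟨J, by omega⟩ = W.f ⟨0, by omega⟩)
    (hfQ : W.f ⟨Q + 1, by omega⟩ = W.f ⟨1, by omega⟩) : DoubleTrace G :=
  W.reindex (spliceOrder hJ hJQ hQ) (spliceOrder_injective hJ hJQ hQ).bijective_of_finite
    fun t => by rw [spliceOrder_csucc, W.f_csucc_spliceExit hJ hJQ hQ hfJ hfQ]

variable (hfJ : W.f ⟨J, by omega⟩ = W.f ⟨0, by omega⟩)
  (hfQ : W.f ⟨Q + 1, by omega⟩ = W.f ⟨1, by omega⟩) (hfQ₀ : W.f ⟨Q, by omega⟩ = W.f ⟨0, by omega⟩)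
include hfQ₀

theorem f_cpred_spliceOrder (t : Fin W.n) :
    W.f (spliceOrder hJ hJQ hQ (cpred t)) =
      W.f (cpred (Equiv.swap ⟨0, by omega⟩ ⟨J, by omega⟩ (spliceOrder hJ hJQ hQ t))) := by
  rw [cpred_eq_of_csucc_eq (spliceExit_involutive hJ hJQ hQ) (spliceOrder_csucc hJ hJQ hQ),
    W.f_spliceExit_cpred hJ hJQ hQ hfQ₀]

theorem vertexFigureRel_splice_of_ne {w : V} (hw : w ≠ W.f ⟨0, by omega⟩) :
    (W.splice hJ hJQ hQ hfJ hfQ).VertexFigureRel w = W.VertexFigureRel w := by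
  rw [splice, vertexFigureRel_reindex w (W.inEdge w), vertexFigureRel_eq_pairRel]
  intro t ht
  rw [W.f_cpred_spliceOrder hJ hJQ hQ hfQ₀, Equiv.swap_apply_of_ne_of_ne]
  · rfl
  · rintro h
    exact hw (by rw [← ht, h])
  · rintro h
    exact hw (by rw [← ht, h, hfJ])

theorem vertexFigureRel_splice_self :
    (W.splice hJ hJQ hQ hfJ hfQ).VertexFigureRel (W.f ⟨0, by omega⟩) =
      pairRel (W.inEdge _ ∘ Equiv.swap ⟨⟨0, by omega⟩, rfl⟩ ⟨⟨J, by omega⟩, hfJ⟩)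
        (W.outEdge _) := by
  rw [splice, vertexFigureRel_reindex]
  intro t ht
  rw [W.f_cpred_spliceOrder hJ hJQ hQ hfQ₀]
  simp only [Function.comp_apply, inEdge, ← Subtype.val_injective.swap_apply]

end Splice

variable {W : DoubleTrace G}

theorem IsParallel.exists_ne_step_eq (hW : W.IsParallel) (k : Fin W.n) :
    ∃ q ≠ k, W.f q = W.f k ∧ W.f (csucc q) = W.f (csucc k) := by
  let S : Finset (Fin W.n) := {q | W.f q = W.f k ∧ W.f (csucc q) = W.f (csucc k)}
  have hk : k ∈ S := by simp [S]
  have hcard : #S = 2 := (hW _ _ (W.adj k)).resolve_left (card_ne_zero_of_mem hk)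
  obtain ⟨q, hq, hqk⟩ := exists_mem_ne (s := S) (by omega) k
  exact ⟨q, hqk, by simpa [S] using hq⟩

theorem IsParallel.exists_fewer_components_of_gap [Fintype V] (hW : W.IsParallel) {v : V} {J : ℕ}
    (hJ : 0 < J) (hJn : J < W.n) (h₀ : W.f ⟨0, by omega⟩ = v) (hJv : W.f ⟨J, hJn⟩ = v)
    (hgap : ∀ p : Fin W.n, 0 < p.val → p.val < J → W.f p ≠ v)
    (hcls : ¬ EqvGen (W.VertexFigureRel v) (W.inEdge v ⟨_, h₀⟩) (W.inEdge v ⟨_, hJv⟩)) :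
    ∃ W' : DoubleTrace G, W'.IsParallel ∧
      ∑ w, W'.vertexFigureComponents w < ∑ w, W.vertexFigureComponents w := by
  subst h₀
  set p₀ : Fin W.n := ⟨0, by omega⟩
  have hsucc₀ : csucc p₀ = ⟨1, by omega⟩ := Fin.ext (by simp [p₀, val_csucc]; omega)
  have hb : G.Adj (W.f p₀) (W.f ⟨1, by omega⟩) := hsucc₀ ▸ W.adj p₀
  have hJ₂ : 2 ≤ J := by
    have : J ≠ 1 := by
      rintro rfl
      exact hb.ne' hJv
    omega
  obtain ⟨q, hqp, hqv, hqb⟩ := hW.exists_ne_step_eq p₀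
  rw [hsucc₀] at hqb
  have hJQ : J ≤ q.val := by
    by_contra h
    exact hgap q (Nat.pos_of_ne_zero fun h' => hqp (Fin.ext h')) (by omega) hqv
  have hQ : q.val + 2 ≤ W.n := by
    by_contra h
    have : csucc q = p₀ := Fin.ext (by simp [p₀, val_csucc]; omega)
    exact hb.ne (by rw [← hqb, this])
  have hfQ : W.f ⟨q.val + 1, by omega⟩ = W.f ⟨1, by omega⟩ := by
    rw [← hqb]
    exact congrArg W.f (Fin.ext (by simp [val_csucc]; omega))
  have hlt : (W.splice hJ₂ hJQ hQ hJv hfQ).vertexFigureComponents (W.f p₀) <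
      W.vertexFigureComponents (W.f p₀) := by
    rw [vertexFigureComponents, vertexFigureComponents, W.vertexFigureRel_splice_self hJ₂ hJQ hQ
      hJv hfQ hqv, vertexFigureRel_eq_pairRel]
    rw [vertexFigureRel_eq_pairRel] at hcls
    exact card_quot_pairRel_swap_lt (W.card_inEdge_add_card_outEdge _) hcls
  refine ⟨W.splice hJ₂ hJQ hQ hJv hfQ, hW.reindex,
    sum_lt_sum (fun w _ => ?_) ⟨W.f p₀, mem_univ _, hlt⟩⟩
  by_cases hw : w = W.f p₀
  · exact hw ▸ hlt.le
  · rw [vertexFigureComponents, vertexFigureComponents,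
      W.vertexFigureRel_splice_of_ne hJ₂ hJQ hQ hJv hfQ hqv hw]

theorem IsParallel.exists_fewer_components_of_covBy [Fintype V] (hW : W.IsParallel) {v : V}
    {i j : {k : Fin W.n // W.f k = v}} (hij : i ⋖ j)
    (hcls : ¬ EqvGen (W.VertexFigureRel v) (W.inEdge v i) (W.inEdge v j)) :
    ∃ W' : DoubleTrace G, W'.IsParallel ∧
      ∑ w, W'.vertexFigureComponents w < ∑ w, W.vertexFigureComponents w := by
  have hlt : i.1.val < j.1.val := hij.1
  have hadd : ∀ p : Fin W.n, p.val + i.1.val < W.n → (p + i.1).val = p.val + i.1.val :=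
    fun p hp => by simp [Fin.val_add, Nat.mod_eq_of_lt hp]
  have h₀ : (⟨0, by omega⟩ + i.1 : Fin W.n) = i.1 := Fin.ext (by rw [hadd _ (by simp)]; simp)
  have hJ : (⟨j.1.val - i.1.val, by omega⟩ + i.1 : Fin W.n) = j.1 :=
    Fin.ext (by rw [hadd _ (by simp; omega)]; simp; omega)
  have hgap : ∀ p : Fin W.n, 0 < p.val → p.val < j.1.val - i.1.val → W.f (p + i.1) ≠ v := by
    intro p hp hpJ hpv
    have hval := hadd p (by omega)
    exact hij.2 (c := ⟨p + i.1, hpv⟩) (by show i.1 < p + i.1; simp [Fin.lt_def, hval]; omega)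
      (by show p + i.1 < j.1; simp [Fin.lt_def, hval]; omega)
  have hv₀ : (W.rotate i.1).f ⟨0, i.1.pos⟩ = v := (congrArg W.f h₀).trans i.2
  have hvJ : (W.rotate i.1).f ⟨j.1.val - i.1.val, (Nat.sub_le _ _).trans_lt j.1.isLt⟩ = v :=
    (congrArg W.f hJ).trans j.2
  have hin₀ : (W.rotate i.1).inEdge v ⟨_, hv₀⟩ = W.inEdge v i :=
    (W.inEdge_rotate i.1 ⟨0, i.1.pos⟩ hv₀).trans (congrArg _ (Subtype.ext h₀))
  have hinJ : (W.rotate i.1).inEdge v ⟨_, hvJ⟩ = W.inEdge v j :=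
    (W.inEdge_rotate i.1 ⟨_, (Nat.sub_le _ _).trans_lt j.1.isLt⟩ hvJ).trans
      (congrArg _ (Subtype.ext hJ))
  have hcls' : ¬ EqvGen ((W.rotate i.1).VertexFigureRel v) ((W.rotate i.1).inEdge v ⟨_, hv₀⟩)
      ((W.rotate i.1).inEdge v ⟨_, hvJ⟩) := by
    rwa [vertexFigureRel_rotate, hin₀, hinJ]
  obtain ⟨W', hW', hsum⟩ := (hW.rotate i.1).exists_fewer_components_of_gap (by omega) _
    hv₀ hvJ hgap hcls'
  simp only [vertexFigureComponents_rotate] at hsum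
  exact ⟨W', hW', hsum⟩

theorem exists_covBy_not_eqvGen_inEdge {v : V} (hv : ¬ W.VertexFigureConnected v) :
    ∃ i j : {k : Fin W.n // W.f k = v}, i ⋖ j ∧
      ¬ EqvGen (W.VertexFigureRel v) (W.inEdge v i) (W.inEdge v j) := by
  simp only [VertexFigureConnected, not_forall] at hv
  obtain ⟨e₁, e₂, he⟩ := hv
  have hdeg := W.card_inEdge_add_card_outEdge v
  rw [vertexFigureRel_eq_pairRel] at he ⊢
  obtain ⟨k₁, hk₁⟩ := exists_eqvGen_pairRel_apply hdeg e₁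
  obtain ⟨k₂, hk₂⟩ := exists_eqvGen_pairRel_apply hdeg e₂
  obtain ⟨i, j, hij, hne⟩ := exists_covBy_ne_of_ne
    (fun k => Quot.mk (pairRel (W.inEdge v) (W.outEdge v)) (W.inEdge v k)) (x := k₁) (y := k₂)
    fun h => he (hk₁.symm.trans _ _ _ ((Quot.eqvGen_exact h).trans _ _ _ hk₂))
  exact ⟨i, j, hij, fun h => hne (Quot.eqvGen_sound h)⟩

end DoubleTrace

theorem parallel_doubleTrace_reduce_components_general {V : Type*} [Fintype V] [DecidableEq V]
    {G : SimpleGraph V} (W : DoubleTrace G)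
    (hpar : W.IsParallel) (hdisc : ∃ v : V, ¬ W.VertexFigureConnected v) :
    ∃ W' : DoubleTrace G, W'.IsParallel ∧
      ∑ v : V, W'.vertexFigureComponents v < ∑ v : V, W.vertexFigureComponents v := by
  obtain ⟨v, hv⟩ := hdisc
  obtain ⟨i, j, hij, hcls⟩ := W.exists_covBy_not_eqvGen_inEdge hv
  exact hpar.exists_fewer_components_of_covBy hij hcls

/-- If `W` is a parallel double trace of a finite connected graph and
some vertex figure of `W` is disconnected, then there is a parallel double trace `W'`
whose vertex figures have strictly fewer connected components in total. -/
theorem parallel_doubleTrace_reduce_components {V : Type*} [Fintype V] [DecidableEq V]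
    {G : SimpleGraph V} (hconn : G.Connected) (W : DoubleTrace G)
    (hpar : W.IsParallel) (hdisc : ∃ v : V, ¬ W.VertexFigureConnected v) :
    ∃ W' : DoubleTrace G, W'.IsParallel ∧
      ∑ v : V, W'.vertexFigureComponents v < ∑ v : V, W.vertexFigureComponents v :=
  parallel_doubleTrace_reduce_components_general W hpar hdisc

end StrongTraces
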